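/- arXiv:1109.3843 — 2 statements merged into one kernel-verified Lean document; each statement's English description precedes it below -/
import Mathlib

section
/- If ‖I_d − UᵀΠᵀΠU‖₂ ≤ ε < 1 and Ψ = ΠU has SVD Ψ = U_Ψ Σ_Ψ V_Ψᵀ, then ‖I_d − Σ_Ψ^{-2}‖₂ ≤ ε/(1−ε). -/
open Matrix

open scoped Matrix.Norms.L2Operator

/-!
Because Σ_Ψ is symmetric and U_Ψ has orthonormal columns, UᵀΠᵀΠU = V_Ψ Σ_Ψ² V_Ψᵀ, and
conjugation by the orthogonal V_Ψ preserves the ℓ² operator norm, so ‖I − Σ_Ψ²‖ ≤ ε.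
In the Banach algebra of d × d matrices the Neumann series gives ‖(Σ_Ψ²)⁻¹‖ ≤ 1/(1 − ε), and
I − A⁻¹ = (A − I)A⁻¹ turns this into ‖I − Σ_Ψ⁻²‖ ≤ ε/(1 − ε).
-/

section NeumannSeries

variable {R : Type*} [NormedRing R] [HasSummableGeomSeries R]

theorem NormedRing.norm_inverse_one_sub_le (h1 : ‖(1 : R)‖ ≤ 1) {t : R} (ht : ‖t‖ < 1) :
    ‖Ring.inverse (1 - t)‖ ≤ (1 - ‖t‖)⁻¹ := by
  rw [← geom_series_eq_inverse t ht]
  linarith [tsum_geometric_le_of_norm_lt_one t ht]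

theorem NormedRing.norm_one_sub_inverse_le (h1 : ‖(1 : R)‖ ≤ 1) {a : R} {ε : ℝ}
    (ha : ‖1 - a‖ ≤ ε) (hε : ε < 1) : ‖1 - Ring.inverse a‖ ≤ ε / (1 - ε) := by
  obtain ⟨t, rfl⟩ : ∃ t, a = 1 - t := ⟨1 - a, (sub_sub_cancel 1 a).symm⟩
  rw [sub_sub_cancel] at ha
  have ht : ‖t‖ < 1 := ha.trans_lt hε
  have hinv : Ring.inverse (1 - t) = 1 + t * Ring.inverse (1 - t) := by
    simpa using inverse_one_sub_nth_order' 1 ht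
  calc ‖1 - Ring.inverse (1 - t)‖ = ‖t * Ring.inverse (1 - t)‖ := by
        rw [← norm_neg, neg_sub]
        nth_rw 1 [hinv]
        rw [add_sub_cancel_left]
    _ ≤ ‖t‖ * (1 - ‖t‖)⁻¹ := by
        grw [norm_mul_le, norm_inverse_one_sub_le h1 ht]
    _ ≤ ε / (1 - ε) := by
        rw [div_eq_mul_inv]
        gcongr
        exact (norm_nonneg t).trans ha

end NeumannSeries

theorem CStarRing.norm_one_le {E : Type*} [NormedRing E] [StarRing E] [CStarRing E] :
    ‖(1 : E)‖ ≤ 1 := by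
  rcases subsingleton_or_nontrivial E with _ | _
  · simp [Subsingleton.elim (1 : E) 0]
  · exact CStarRing.norm_one.le

theorem CStarRing.norm_one_sub_conj_of_mem_unitary {E : Type*} [NormedRing E] [StarRing E]
    [CStarRing E] {u : E} (hu : u ∈ unitary E) (x : E) :
    ‖1 - u * x * star u‖ = ‖1 - x‖ := by
  have hconj : 1 - u * x * star u = u * (1 - x) * star u := by
    rw [mul_sub, sub_mul, mul_one, Unitary.mul_star_self_of_mem hu]
  rw [hconj, norm_mul_mem_unitary _ (Unitary.star_mem hu), norm_mem_unitary_mul _ hu]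

theorem Matrix.transpose_mul_self_of_eq_mul_mul_transpose {m k α : Type*} [Fintype m] [Fintype k]
    [DecidableEq k] [CommSemiring α] {A W : Matrix m k α} {S V : Matrix k k α}
    (hA : A = W * S * Vᵀ) (hW : Wᵀ * W = 1) (hS : Sᵀ = S) :
    Aᵀ * A = V * (S * S) * Vᵀ := by
  simp only [hA, transpose_mul, transpose_transpose, hS, Matrix.mul_assoc]
  rw [← Matrix.mul_assoc Wᵀ, hW, Matrix.one_mul]

theorem singular_values_inverse_bound_general {n d r : ℕ}
    (U : Matrix (Fin n) (Fin d) ℝ) (Pi : Matrix (Fin r) (Fin n) ℝ)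
    (UPsi : Matrix (Fin r) (Fin d) ℝ) (SPsi VPsi : Matrix (Fin d) (Fin d) ℝ)
    (ε : ℝ) (hε1 : ε < 1)
    (h : ‖(1 : Matrix (Fin d) (Fin d) ℝ) - Uᵀ * Piᵀ * Pi * U‖ ≤ ε)
    (hSVD : Pi * U = UPsi * SPsi * VPsiᵀ)
    (hUPsi : UPsiᵀ * UPsi = 1) (hVPsi : VPsiᵀ * VPsi = 1)
    (hdiag : SPsi.IsDiag) :
    ‖(1 : Matrix (Fin d) (Fin d) ℝ) - SPsi⁻¹ * SPsi⁻¹‖ ≤ ε / (1 - ε) := by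
  have hstar : star VPsi = VPsiᵀ := by
    rw [star_eq_conjTranspose, conjTranspose_eq_transpose_of_trivial]
  have hV : VPsi ∈ unitary (Matrix (Fin d) (Fin d) ℝ) :=
    mem_unitaryGroup_iff'.2 (hstar ▸ hVPsi)
  have hgram : Uᵀ * Piᵀ * Pi * U = VPsi * (SPsi * SPsi) * star VPsi := by
    rw [hstar, ← transpose_mul_self_of_eq_mul_mul_transpose hSVD hUPsi hdiag.isSymm,
      transpose_mul, Matrix.mul_assoc, Matrix.mul_assoc]
  rw [hgram, CStarRing.norm_one_sub_conj_of_mem_unitary hV] at h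
  rw [← Matrix.mul_inv_rev, nonsing_inv_eq_ringInverse]
  exact NormedRing.norm_one_sub_inverse_le CStarRing.norm_one_le h hε1

theorem singular_values_inverse_bound {n d r : ℕ}
    (U : Matrix (Fin n) (Fin d) ℝ) (Pi : Matrix (Fin r) (Fin n) ℝ)
    (UPsi : Matrix (Fin r) (Fin d) ℝ) (SPsi VPsi : Matrix (Fin d) (Fin d) ℝ)
    (ε : ℝ) (hε0 : 0 < ε) (hε1 : ε < 1)
    (hU : Uᵀ * U = 1)
    (h : ‖(1 : Matrix (Fin d) (Fin d) ℝ) - Uᵀ * Piᵀ * Pi * U‖ ≤ ε)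
    (hSVD : Pi * U = UPsi * SPsi * VPsiᵀ)
    (hUPsi : UPsiᵀ * UPsi = 1) (hVPsi : VPsiᵀ * VPsi = 1)
    (hdiag : SPsi.IsDiag) (hpos : ∀ i, 0 < SPsi i i) :
    ‖(1 : Matrix (Fin d) (Fin d) ℝ) - SPsi⁻¹ * SPsi⁻¹‖ ≤ ε / (1 - ε) :=
  singular_values_inverse_bound_general U Pi UPsi SPsi VPsi ε hε1 h hSVD hUPsi hVPsi hdiag
end

section
/- If A = UΣVᵀ is the thin SVD of a rank-d matrix A ∈ ℝ^{n×d} and Π ∈ ℝ^{r×n} is such that ΠU has rank d, then (ΠA)⁺ = VΣ^{-1}(ΠU)⁺. -/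
open Matrix

def IsMoorePenrose {m n : ℕ} (A : Matrix (Fin m) (Fin n) ℝ) (Ap : Matrix (Fin n) (Fin m) ℝ) : Prop :=
  A * Ap * A = A ∧ Ap * A * Ap = Ap ∧ (A * Ap)ᵀ = A * Ap ∧ (Ap * A)ᵀ = Ap * A

/-
Write B = ΠU. Since B has full column rank d, its pseudoinverse is a left inverse: B⁺B is an
idempotent d × d matrix of rank d, hence the identity. Then ΠA = B (SVᵀ) with SVᵀ invertible, and
V S⁻¹ B⁺ is checked directly to satisfy the four Penrose equations for ΠA; these determine the
pseudoinverse uniquely.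
-/

theorem Matrix.isUnit_of_rank_eq_card {K n : Type*} [Field K] [Fintype n] [DecidableEq n]
    {P : Matrix n n K} (h : P.rank = Fintype.card n) : IsUnit P := by
  rw [← mulVec_surjective_iff_isUnit, ← coe_mulVecLin, ← LinearMap.range_eq_top]
  apply Submodule.eq_top_of_finrank_eq
  rw [← Matrix.rank, h, Module.finrank_fintype_fun_eq_card]

namespace IsMoorePenrose

variable {m n : ℕ} {A : Matrix (Fin m) (Fin n) ℝ}

theorem mul_left_eq {X Y : Matrix (Fin n) (Fin m) ℝ}
    (hX : IsMoorePenrose A X) (hY : IsMoorePenrose A Y) : A * X = A * Y :=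
  calc A * X = (A * Y) * (A * X) := by rw [← Matrix.mul_assoc, hY.1]
    _ = (A * X * (A * Y))ᵀ := by rw [transpose_mul, hX.2.2.1, hY.2.2.1]
    _ = (A * Y)ᵀ := by rw [← Matrix.mul_assoc, hX.1]
    _ = A * Y := hY.2.2.1

theorem mul_right_eq {X Y : Matrix (Fin n) (Fin m) ℝ}
    (hX : IsMoorePenrose A X) (hY : IsMoorePenrose A Y) : X * A = Y * A :=
  calc X * A = (X * A) * (Y * A) := by rw [Matrix.mul_assoc, ← Matrix.mul_assoc A Y A, hY.1]
    _ = (Y * A * (X * A))ᵀ := by rw [transpose_mul, hX.2.2.2, hY.2.2.2]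
    _ = (Y * A)ᵀ := by rw [Matrix.mul_assoc, ← Matrix.mul_assoc A X A, hX.1]
    _ = Y * A := hY.2.2.2

theorem unique {X Y : Matrix (Fin n) (Fin m) ℝ}
    (hX : IsMoorePenrose A X) (hY : IsMoorePenrose A Y) : X = Y :=
  calc X = X * A * X := hX.2.1.symm
    _ = Y * (A * X) := by rw [hX.mul_right_eq hY, Matrix.mul_assoc]
    _ = Y * A * Y := by rw [hX.mul_left_eq hY, Matrix.mul_assoc]
    _ = Y := hY.2.1

theorem mul_self_eq_one_of_rank_eq {Ap : Matrix (Fin n) (Fin m) ℝ}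
    (h : IsMoorePenrose A Ap) (hA : A.rank = n) : Ap * A = 1 := by
  have hidem : IsIdempotentElem (Ap * A) := by
    rw [IsIdempotentElem, Matrix.mul_assoc, ← Matrix.mul_assoc A, h.1]
  have hrank : (Ap * A).rank = Fintype.card (Fin n) := by
    refine le_antisymm (rank_le_card_width _) ?_
    calc Fintype.card (Fin n) = (A * (Ap * A)).rank := by
          rw [← Matrix.mul_assoc, h.1, hA, Fintype.card_fin]
      _ ≤ (Ap * A).rank := rank_mul_le_right _ _
  exact (IsIdempotentElem.iff_eq_one_of_isUnit (isUnit_of_rank_eq_card hrank)).1 hidem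

theorem mul_of_mul_self_eq_one {Ap : Matrix (Fin n) (Fin m) ℝ} (h : IsMoorePenrose A Ap)
    (hAp : Ap * A = 1) {W W' : Matrix (Fin n) (Fin n) ℝ} (hWW' : W * W' = 1) (hW'W : W' * W = 1) :
    IsMoorePenrose (A * W) (W' * Ap) := by
  have hcancel : W' * Ap * (A * W) = 1 := by
    rw [Matrix.mul_assoc, ← Matrix.mul_assoc Ap, hAp, Matrix.one_mul, hW'W]
  refine ⟨?_, ?_, ?_, ?_⟩
  · rw [Matrix.mul_assoc, hcancel, Matrix.mul_one]
  · rw [hcancel, Matrix.one_mul]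
  · rw [Matrix.mul_assoc, ← Matrix.mul_assoc W, hWW', Matrix.one_mul]
    exact h.2.2.1
  · rw [hcancel, transpose_one]

end IsMoorePenrose

theorem pinv_of_sketch_general {n d r : ℕ}
    (A U : Matrix (Fin n) (Fin d) ℝ) (S V : Matrix (Fin d) (Fin d) ℝ)
    (Pi : Matrix (Fin r) (Fin n) ℝ)
    (PiAp : Matrix (Fin d) (Fin r) ℝ) (PiUp : Matrix (Fin d) (Fin r) ℝ)
    (hSVD : A = U * S * Vᵀ)
    (hV : Vᵀ * V = 1) (hV' : V * Vᵀ = 1)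
    (hS : Invertible S)
    (hrankPiU : (Pi * U).rank = d)
    (h1 : IsMoorePenrose (Pi * A) PiAp)
    (h2 : IsMoorePenrose (Pi * U) PiUp) :
    PiAp = V * S⁻¹ * PiUp := by
  have hPiA : Pi * A = Pi * U * (S * Vᵀ) := by simp only [hSVD, Matrix.mul_assoc]
  have hWW' : S * Vᵀ * (V * S⁻¹) = 1 := by
    rw [Matrix.mul_assoc, ← Matrix.mul_assoc Vᵀ, hV, Matrix.one_mul, mul_inv_of_invertible]
  have hW'W : V * S⁻¹ * (S * Vᵀ) = 1 := by
    rw [Matrix.mul_assoc, ← Matrix.mul_assoc S⁻¹, inv_mul_of_invertible, Matrix.one_mul, hV']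
  have hcand := h2.mul_of_mul_self_eq_one (h2.mul_self_eq_one_of_rank_eq hrankPiU) hWW' hW'W
  rw [← hPiA] at hcand
  exact h1.unique hcand

theorem pinv_of_sketch {n d r : ℕ}
    (A U : Matrix (Fin n) (Fin d) ℝ) (S V : Matrix (Fin d) (Fin d) ℝ)
    (Pi : Matrix (Fin r) (Fin n) ℝ)
    (PiAp : Matrix (Fin d) (Fin r) ℝ) (PiUp : Matrix (Fin d) (Fin r) ℝ)
    (hrank : A.rank = d)
    (hSVD : A = U * S * Vᵀ) (hU : Uᵀ * U = 1)
    (hV : Vᵀ * V = 1) (hV' : V * Vᵀ = 1)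
    (hS : Invertible S)
    (hrankPiU : (Pi * U).rank = d)
    (h1 : IsMoorePenrose (Pi * A) PiAp)
    (h2 : IsMoorePenrose (Pi * U) PiUp) :
    PiAp = V * S⁻¹ * PiUp :=
  pinv_of_sketch_general A U S V Pi PiAp PiUp hSVD hV hV' hS hrankPiU h1 h2
end
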